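/- arXiv:2206.11099 — 3 statements merged into one kernel-verified Lean document; each statement's English description precedes it below -/
import Mathlib

section
/- Let k be a totally ordered division ring, let Ω be a convex subset of a right k-vector space E, and let F ∪ {a} be a set of affine functionals on E. Set A⁺ := {x ∈ Ω : a(x) > 0} and A⁻ := {x ∈ Ω : a(x) < 0}. Then the greatest element of Bool(F, Ω) below A⁺ ∪ A⁻ exists if and only if the greatest elements of Bool(F, Ω) below A⁺ and below A⁻ both exist, and in that case (A⁺ ∪ A⁻)_{Bool(F,Ω)} = (A⁺)_{Bool(F,Ω)} ∪ (A⁻)_{Bool(F,Ω)}. -/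
/-- An affine functional on a right `k`-vector space `E`: a map `f : E → k` such that
`f - f 0` is a linear functional (additive, and `(f - f 0)(x · c) = (f - f 0)(x) * c`). -/
def IsAffineFunctional (k : Type*) [DivisionRing k] (E : Type*) [AddCommGroup E]
    [Module kᵐᵒᵖ E] (f : E → k) : Prop :=
  (∀ x y : E, f (x + y) - f 0 = (f x - f 0) + (f y - f 0)) ∧
  (∀ (c : k) (x : E), f (MulOpposite.op c • x) - f 0 = (f x - f 0) * c)

/-- A convex subset of a right `k`-vector space. -/
def IsConvexSet (k : Type*) [DivisionRing k] [LinearOrder k] (E : Type*) [AddCommGroup E]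
    [Module kᵐᵒᵖ E] (Ω : Set E) : Prop :=
  ∀ x ∈ Ω, ∀ y ∈ Ω, ∀ lam mu : k, 0 ≤ lam → 0 ≤ mu → lam + mu = 1 →
    MulOpposite.op lam • x + MulOpposite.op mu • y ∈ Ω

/-- Membership in `Bool(F, Ω)`: the Boolean subalgebra of the powerset of `Ω` generated
by the sets `⟦f > 0⟧ = {x ∈ Ω : f x > 0}` and `⟦f < 0⟧` for `f ∈ F`. -/
inductive MemBoolF {k E : Type*} [DivisionRing k] [LinearOrder k]
    (F : Set (E → k)) (Ω : Set E) : Set E → Prop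
  | pos (f : E → k) (hf : f ∈ F) : MemBoolF F Ω {x ∈ Ω | 0 < f x}
  | neg (f : E → k) (hf : f ∈ F) : MemBoolF F Ω {x ∈ Ω | f x < 0}
  | empty : MemBoolF F Ω ∅
  | full : MemBoolF F Ω Ω
  | union {U V : Set E} : MemBoolF F Ω U → MemBoolF F Ω V → MemBoolF F Ω (U ∪ V)
  | inter {U V : Set E} : MemBoolF F Ω U → MemBoolF F Ω V → MemBoolF F Ω (U ∩ V)
  | sdiff {U V : Set E} : MemBoolF F Ω U → MemBoolF F Ω V → MemBoolF F Ω (U \ V)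

/-! Every member of `Bool(F, Ω)` is a finite union of convex members: the generators
`⟦f > 0⟧`, `⟦f < 0⟧` and their complements `⟦f ≤ 0⟧`, `⟦f ≥ 0⟧` in `Ω` are convex, and the
class of such unions is closed under `∪` and `∩`. A convex set avoiding the zero set of the
affine functional `a` lies entirely in `A⁺` or in `A⁻`, because `a` is affine along segments.
So every member `V ⊆ A⁺ ∪ A⁻` splits as `V₁ ∪ V₂` with members `V₁ ⊆ A⁺` and `V₂ ⊆ A⁻`, and
since `A⁺` and `A⁻` are disjoint the statement about greatest elements is pure lattice theory. -/
theorem IsStrictOrderedRing.of_covariantClass_lt {k : Type*} [Ring k] [LinearOrder k]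
    [Nontrivial k] [CovariantClass k k (· + ·) (· < ·)] [PosMulStrictMono k]
    [MulPosStrictMono k] : IsStrictOrderedRing k :=
  haveI : IsOrderedAddMonoid k :=
    { add_le_add_left := fun _ _ h c => by
        simpa only [add_comm _ c] using (covariantClass_le_of_lt k k (· + ·)).elim c h }
  haveI : ZeroLEOneClass k := ⟨le_of_not_gt fun h => by
    have := mul_pos (neg_pos.2 h) (neg_pos.2 h)
    rw [neg_mul_neg, one_mul] at this
    exact (this.trans h).false⟩
  .of_mul_pos fun _ _ => mul_pos

section Affine

variable {k : Type*} [DivisionRing k] {E : Type*} [AddCommGroup E] [Module kᵐᵒᵖ E]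
  {f : E → k}

theorem IsAffineFunctional.map_add_smul (hf : IsAffineFunctional k E f) {lam mu : k}
    (h : lam + mu = 1) (x y : E) :
    f (MulOpposite.op lam • x + MulOpposite.op mu • y) = f x * lam + f y * mu := by
  have key := hf.1 (MulOpposite.op lam • x) (MulOpposite.op mu • y)
  rw [hf.2, hf.2, sub_eq_iff_eq_add] at key
  obtain rfl : mu = 1 - lam := eq_sub_of_add_eq' h
  rw [key]
  noncomm_ring

variable [LinearOrder k]

theorem IsConvexSet.inter {C D : Set E} (hC : IsConvexSet k E C) (hD : IsConvexSet k E D) :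
    IsConvexSet k E (C ∩ D) := fun x hx y hy lam mu hl hm h =>
  ⟨hC x hx.1 y hy.1 lam mu hl hm h, hD x hx.2 y hy.2 lam mu hl hm h⟩

variable [IsStrictOrderedRing k]

theorem mul_add_mul_mem_uIcc (p q : k) {lam mu : k} (hl : 0 ≤ lam) (hm : 0 ≤ mu)
    (h : lam + mu = 1) : p * lam + q * mu ∈ Set.uIcc p q := by
  constructor
  · calc min p q = min p q * lam + min p q * mu := by rw [← mul_add, h, mul_one]
      _ ≤ p * lam + q * mu := by gcongr; exacts [min_le_left _ _, min_le_right _ _]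
  · calc p * lam + q * mu ≤ max p q * lam + max p q * mu := by
          gcongr; exacts [le_max_left _ _, le_max_right _ _]
      _ = max p q := by rw [← mul_add, h, mul_one]

theorem IsConvexSet.sep_mem_of_ordConnected {Ω : Set E} (hΩ : IsConvexSet k E Ω)
    (hf : IsAffineFunctional k E f) {I : Set k} (hI : I.OrdConnected) :
    IsConvexSet k E {x ∈ Ω | f x ∈ I} := fun x hx y hy lam mu hl hm h => by
  refine ⟨hΩ x hx.1 y hy.1 lam mu hl hm h, ?_⟩
  rw [hf.map_add_smul h]
  exact hI.uIcc_subset hx.2 hy.2 (mul_add_mul_mem_uIcc _ _ hl hm h)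

theorem IsConvexSet.sdiff_sep_mem_of_ordConnected {Ω : Set E} (hΩ : IsConvexSet k E Ω)
    (hf : IsAffineFunctional k E f) {I : Set k} (hI : Iᶜ.OrdConnected) :
    IsConvexSet k E (Ω \ {x ∈ Ω | f x ∈ I}) := by
  have : Ω \ {x ∈ Ω | f x ∈ I} = {x ∈ Ω | f x ∈ Iᶜ} := by ext; simp
  rw [this]
  exact hΩ.sep_mem_of_ordConnected hf hI

theorem IsAffineFunctional.exists_eq_zero_of_neg_of_pos (hf : IsAffineFunctional k E f) {C : Set E}
    (hC : IsConvexSet k E C) {x y : E} (hx : x ∈ C) (hy : y ∈ C) (hfx : f x < 0)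
    (hfy : 0 < f y) : ∃ z ∈ C, f z = 0 := by
  have hd : 0 < f y - f x := sub_pos.2 (hfx.trans hfy)
  -- `lam` is the zero of `t ↦ f y * t + f x * (1 - t)`, i.e. of `f` along the segment
  set lam := (f y - f x)⁻¹ * -f x with hlam
  have hsum : lam + (f y - f x)⁻¹ * f y = 1 := by
    rw [hlam, ← mul_add, neg_add_eq_sub, inv_mul_cancel₀ hd.ne']
  refine ⟨_, hC y hy x hx _ _ (mul_nonneg (inv_nonneg.2 hd.le) (neg_nonneg.2 hfx.le))
    (mul_nonneg (inv_nonneg.2 hd.le) hfy.le) hsum, ?_⟩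
  rw [hf.map_add_smul hsum, eq_sub_of_add_eq' hsum]
  calc f y * lam + f x * (1 - lam) = (f y - f x) * lam + f x := by noncomm_ring
    _ = 0 := by rw [hlam, mul_inv_cancel_left₀ hd.ne', neg_add_cancel]

theorem IsAffineFunctional.subset_pos_or_subset_neg (hf : IsAffineFunctional k E f)
    {Ω C : Set E} (hC : IsConvexSet k E C)
    (h : C ⊆ {x ∈ Ω | 0 < f x} ∪ {x ∈ Ω | f x < 0}) :
    C ⊆ {x ∈ Ω | 0 < f x} ∨ C ⊆ {x ∈ Ω | f x < 0} := by
  by_contra! ⟨hpos, hneg⟩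
  obtain ⟨x, hxC, hx⟩ := Set.not_subset.1 hpos
  obtain ⟨y, hyC, hy⟩ := Set.not_subset.1 hneg
  obtain ⟨z, hzC, hz⟩ := hf.exists_eq_zero_of_neg_of_pos hC hxC hyC ((h hxC).resolve_left hx).2
    ((h hyC).resolve_right hy).2
  rcases h hzC with ⟨-, hz'⟩ | ⟨-, hz'⟩ <;> simp [hz] at hz'

end Affine

section Bool

variable {k : Type*} [DivisionRing k] [LinearOrder k] {E : Type*} {F : Set (E → k)}
  {Ω U V : Set E}

theorem MemBoolF.subset (h : MemBoolF F Ω U) : U ⊆ Ω := by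
  induction h with
  | pos | neg => exact Set.sep_subset _ _
  | empty => exact Set.empty_subset _
  | full => exact subset_rfl
  | union _ _ ihU ihV => exact Set.union_subset ihU ihV
  | inter _ _ ihU _ => exact Set.inter_subset_left.trans ihU
  | sdiff _ _ ihU _ => exact Set.sdiff_subset.trans ihU

theorem MemBoolF.sUnion {S : Set (Set E)} (hS : S.Finite) (h : ∀ C ∈ S, MemBoolF F Ω C) :
    MemBoolF F Ω (⋃₀ S) := by
  induction S, hS using Set.Finite.induction_on with
  | empty => simpa using MemBoolF.empty
  | insert _ _ ih =>
    rw [Set.sUnion_insert]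
    exact (h _ (Set.mem_insert _ _)).union (ih fun C hC => h C (Set.mem_insert_of_mem _ hC))

variable [AddCommGroup E] [Module kᵐᵒᵖ E]

def IsFiniteConvexUnion (F : Set (E → k)) (Ω U : Set E) : Prop :=
  ∃ S : Set (Set E), S.Finite ∧ (∀ C ∈ S, MemBoolF F Ω C ∧ IsConvexSet k E C) ∧ ⋃₀ S = U

namespace IsFiniteConvexUnion

theorem empty : IsFiniteConvexUnion F Ω ∅ :=
  ⟨∅, Set.finite_empty, by simp, Set.sUnion_empty⟩

theorem of_convex (h : MemBoolF F Ω U) (hU : IsConvexSet k E U) : IsFiniteConvexUnion F Ω U :=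
  ⟨{U}, Set.finite_singleton U, by simpa using ⟨h, hU⟩, Set.sUnion_singleton U⟩

theorem union (hU : IsFiniteConvexUnion F Ω U) (hV : IsFiniteConvexUnion F Ω V) :
    IsFiniteConvexUnion F Ω (U ∪ V) := by
  obtain ⟨S, hSfin, hS, rfl⟩ := hU
  obtain ⟨T, hTfin, hT, rfl⟩ := hV
  exact ⟨S ∪ T, hSfin.union hTfin, fun C hC => hC.elim (hS C) (hT C), Set.sUnion_union S T⟩

theorem inter (hU : IsFiniteConvexUnion F Ω U) (hV : IsFiniteConvexUnion F Ω V) :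
    IsFiniteConvexUnion F Ω (U ∩ V) := by
  obtain ⟨S, hSfin, hS, rfl⟩ := hU
  obtain ⟨T, hTfin, hT, rfl⟩ := hV
  refine ⟨Set.image2 (· ∩ ·) S T, hSfin.image2 _ hTfin, ?_, ?_⟩
  · rintro _ ⟨A, hA, B, hB, rfl⟩
    exact ⟨(hS A hA).1.inter (hT B hB).1, (hS A hA).2.inter (hT B hB).2⟩
  · rw [Set.sUnion_image2, Set.sUnion_eq_biUnion, Set.sUnion_eq_biUnion, Set.iUnion₂_inter]
    simp only [Set.inter_iUnion₂]

end IsFiniteConvexUnion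

theorem MemBoolF.isFiniteConvexUnion [IsStrictOrderedRing k] (hΩ : IsConvexSet k E Ω)
    (hF : ∀ f ∈ F, IsAffineFunctional k E f) (h : MemBoolF F Ω U) :
    IsFiniteConvexUnion F Ω U ∧ IsFiniteConvexUnion F Ω (Ω \ U) := by
  induction h with
  | pos f hf =>
    exact ⟨.of_convex (.pos f hf) (hΩ.sep_mem_of_ordConnected (hF f hf) Set.ordConnected_Ioi),
      .of_convex (MemBoolF.full.sdiff (.pos f hf)) (hΩ.sdiff_sep_mem_of_ordConnected (hF f hf)
        (Set.compl_Ioi (a := (0 : k)) ▸ Set.ordConnected_Iic))⟩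
  | neg f hf =>
    exact ⟨.of_convex (.neg f hf) (hΩ.sep_mem_of_ordConnected (hF f hf) Set.ordConnected_Iio),
      .of_convex (MemBoolF.full.sdiff (.neg f hf)) (hΩ.sdiff_sep_mem_of_ordConnected (hF f hf)
        (Set.compl_Iio (a := (0 : k)) ▸ Set.ordConnected_Ici))⟩
  | empty => exact ⟨.empty, by rw [Set.sdiff_empty]; exact .of_convex .full hΩ⟩
  | full => exact ⟨.of_convex .full hΩ, by rw [Set.sdiff_self]; exact .empty⟩
  | union _ _ ihU ihV => exact ⟨ihU.1.union ihV.1, Set.sdiff_inter_sdiff ▸ ihU.2.inter ihV.2⟩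
  | inter _ _ ihU ihV => exact ⟨ihU.1.inter ihV.1, Set.sdiff_inter ▸ ihU.2.union ihV.2⟩
  | sdiff hU hV ihU ihV =>
    constructor
    · rw [← Set.inter_eq_left.2 hU.subset, Set.inter_sdiff_assoc]
      exact ihU.1.inter ihV.2
    · rw [Set.sdiff_sdiff_right, Set.inter_eq_right.2 hV.subset]
      exact ihU.2.union ihV.1

theorem IsFiniteConvexUnion.exists_split [IsStrictOrderedRing k] {a : E → k}
    (ha : IsAffineFunctional k E a) (hU : IsFiniteConvexUnion F Ω U)
    (hsub : U ⊆ {x ∈ Ω | 0 < a x} ∪ {x ∈ Ω | a x < 0}) :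
    ∃ U₁ U₂, (MemBoolF F Ω U₁ ∧ U₁ ⊆ {x ∈ Ω | 0 < a x}) ∧
      (MemBoolF F Ω U₂ ∧ U₂ ⊆ {x ∈ Ω | a x < 0}) ∧ U = U₁ ∪ U₂ := by
  obtain ⟨S, hSfin, hS, rfl⟩ := hU
  have hpieces : ∀ C ∈ S, C ⊆ {x ∈ Ω | 0 < a x} ∨ C ⊆ {x ∈ Ω | a x < 0} := fun C hC =>
    ha.subset_pos_or_subset_neg (hS C hC).2 ((Set.subset_sUnion_of_mem hC).trans hsub)
  refine ⟨_, _, ⟨.sUnion (hSfin.subset (Set.sep_subset _ _)) fun C hC => (hS C hC.1).1,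
      Set.sUnion_subset fun C hC => hC.2⟩,
    ⟨.sUnion (hSfin.subset (Set.sep_subset _ _)) fun C hC => (hS C hC.1).1,
      Set.sUnion_subset fun C hC => hC.2⟩, ?_⟩
  rw [← Set.sUnion_union, ← Set.sep_or, Set.sep_eq_self_iff_mem_true.2 hpieces]

end Bool

section GreatestBelow

variable {α : Type*} {B : α → Prop} {p m : α}

theorem isGreatest_sup_of_split [Lattice α] (hB : ∀ u v, B u → B v → B (u ⊔ v))
    (hsplit : ∀ v, B v → v ≤ p ⊔ m →
      ∃ v₁ v₂, (B v₁ ∧ v₁ ≤ p) ∧ (B v₂ ∧ v₂ ≤ m) ∧ v = v₁ ⊔ v₂)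
    {wp wm : α} (hp : IsGreatest {v | B v ∧ v ≤ p} wp) (hm : IsGreatest {v | B v ∧ v ≤ m} wm) :
    IsGreatest {v | B v ∧ v ≤ p ⊔ m} (wp ⊔ wm) := by
  refine ⟨⟨hB _ _ hp.1.1 hm.1.1, sup_le_sup hp.1.2 hm.1.2⟩, fun v hv => ?_⟩
  obtain ⟨v₁, v₂, h₁, h₂, rfl⟩ := hsplit v hv.1 hv.2
  exact sup_le_sup (hp.2 h₁) (hm.2 h₂)

theorem exists_isGreatest_of_split [DistribLattice α] [OrderBot α] (hpm : Disjoint p m)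
    (hsplit : ∀ v, B v → v ≤ p ⊔ m →
      ∃ v₁ v₂, (B v₁ ∧ v₁ ≤ p) ∧ (B v₂ ∧ v₂ ≤ m) ∧ v = v₁ ⊔ v₂)
    {w : α} (hw : IsGreatest {v | B v ∧ v ≤ p ⊔ m} w) :
    (∃ wp, IsGreatest {v | B v ∧ v ≤ p} wp) ∧ (∃ wm, IsGreatest {v | B v ∧ v ≤ m} wm) := by
  obtain ⟨w₁, w₂, h₁, h₂, rfl⟩ := hsplit w hw.1.1 hw.1.2
  refine ⟨⟨w₁, h₁, fun v hv => ?_⟩, ⟨w₂, h₂, fun v hv => ?_⟩⟩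
  · exact Disjoint.left_le_of_le_sup_right (hw.2 ⟨hv.1, hv.2.trans le_sup_left⟩)
      (hpm.mono hv.2 h₂.2)
  · exact Disjoint.left_le_of_le_sup_left (hw.2 ⟨hv.1, hv.2.trans le_sup_right⟩)
      (hpm.symm.mono hv.2 h₁.2)

end GreatestBelow

/-- for a convex set `Ω` in a right `k`-vector space `E` and affine
functionals `F ∪ {a}` on `E`, with `A⁺ = {x ∈ Ω : a x > 0}` and `A⁻ = {x ∈ Ω : a x < 0}`:
the greatest member of `Bool(F, Ω)` contained in `A⁺ ∪ A⁻` exists iff the greatest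
members of `Bool(F, Ω)` contained in `A⁺` and in `A⁻` both exist, in which case
`(A⁺ ∪ A⁻)_{Bool(F,Ω)} = (A⁺)_{Bool(F,Ω)} ∪ (A⁻)_{Bool(F,Ω)}`. -/
theorem stmt12 (k : Type*) [DivisionRing k] [LinearOrder k]
    [CovariantClass k k (· + ·) (· < ·)] [PosMulStrictMono k] [MulPosStrictMono k]
    (E : Type*) [AddCommGroup E] [Module kᵐᵒᵖ E]
    (Ω : Set E) (hΩ : IsConvexSet k E Ω)
    (F : Set (E → k)) (hF : ∀ f ∈ F, IsAffineFunctional k E f)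
    (a : E → k) (ha : IsAffineFunctional k E a) :
    ((∃ W : Set E,
        IsGreatest {V : Set E | MemBoolF F Ω V ∧
          V ⊆ {x ∈ Ω | 0 < a x} ∪ {x ∈ Ω | a x < 0}} W) ↔
      ((∃ W : Set E, IsGreatest {V : Set E | MemBoolF F Ω V ∧ V ⊆ {x ∈ Ω | 0 < a x}} W) ∧
       (∃ W : Set E,
          IsGreatest {V : Set E | MemBoolF F Ω V ∧ V ⊆ {x ∈ Ω | a x < 0}} W))) ∧
    (∀ W Wp Wm : Set E,
      IsGreatest {V : Set E | MemBoolF F Ω V ∧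
        V ⊆ {x ∈ Ω | 0 < a x} ∪ {x ∈ Ω | a x < 0}} W →
      IsGreatest {V : Set E | MemBoolF F Ω V ∧ V ⊆ {x ∈ Ω | 0 < a x}} Wp →
      IsGreatest {V : Set E | MemBoolF F Ω V ∧ V ⊆ {x ∈ Ω | a x < 0}} Wm →
      W = Wp ∪ Wm) := by
  have := IsStrictOrderedRing.of_covariantClass_lt (k := k)
  have hsplit : ∀ V, MemBoolF F Ω V → V ⊆ {x ∈ Ω | 0 < a x} ∪ {x ∈ Ω | a x < 0} →
      ∃ V₁ V₂, (MemBoolF F Ω V₁ ∧ V₁ ⊆ {x ∈ Ω | 0 < a x}) ∧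
        (MemBoolF F Ω V₂ ∧ V₂ ⊆ {x ∈ Ω | a x < 0}) ∧ V = V₁ ∪ V₂ := fun V hV hsub =>
    (hV.isFiniteConvexUnion hΩ hF).1.exists_split ha hsub
  have hdisj : Disjoint {x ∈ Ω | 0 < a x} {x ∈ Ω | a x < 0} :=
    Set.disjoint_left.2 fun _ hpos hneg => hpos.2.not_gt hneg.2
  have hsup {Wp Wm : Set E} (hWp : IsGreatest {V | MemBoolF F Ω V ∧ V ⊆ {x ∈ Ω | 0 < a x}} Wp)
      (hWm : IsGreatest {V | MemBoolF F Ω V ∧ V ⊆ {x ∈ Ω | a x < 0}} Wm) :=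
    isGreatest_sup_of_split (fun _ _ => .union) hsplit hWp hWm
  exact ⟨⟨fun ⟨_, hW⟩ => exists_isGreatest_of_split hdisj hsplit hW,
    fun ⟨⟨_, hWp⟩, ⟨_, hWm⟩⟩ => ⟨_, hsup hWp hWm⟩⟩,
    fun _ _ _ hW hWp hWm => hW.unique (hsup hWp hWm)⟩
end

section
/- Let k be a totally ordered division ring, let I ⊆ J be sets, and let D be a finite subset of k^(J). Then Bool(k^(I) ∪ D, k^(J)) is relatively complete in Bool(k^(J), k^(J)). -/
/-- The linear functional `x ↦ Σ_i a_i * x_i` on `k^(ι)` associated with `a ∈ k^(ι)`. -/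
def pairing {k ι : Type*} [DivisionRing k] (a x : ι →₀ k) : k :=
  a.sum fun i c => c * x i

/-- The vectors of `k^(ι)` supported on a subset `I ⊆ ι` (the copy of `k^(I)`
inside `k^(ι)`). -/
def suppIn {k ι : Type*} [Zero k] (I : Set ι) : Set (ι →₀ k) :=
  {y : ι →₀ k | ∀ i, i ∉ I → y i = 0}

/-- Membership in `Bool(A, Ω)`: the Boolean subalgebra of the powerset of `Ω` generated
by the sets `⟦a > 0⟧` and `⟦a < 0⟧` for `a ∈ A` (identifying `a` with its linear
functional). -/
inductive MemBool {k ι : Type*} [DivisionRing k] [LinearOrder k]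
    (A Ω : Set (ι →₀ k)) : Set (ι →₀ k) → Prop
  | pos (a : ι →₀ k) (ha : a ∈ A) : MemBool A Ω {x ∈ Ω | 0 < pairing a x}
  | neg (a : ι →₀ k) (ha : a ∈ A) : MemBool A Ω {x ∈ Ω | pairing a x < 0}
  | empty : MemBool A Ω ∅
  | full : MemBool A Ω Ω
  | union {U V : Set (ι →₀ k)} : MemBool A Ω U → MemBool A Ω V → MemBool A Ω (U ∪ V)
  | inter {U V : Set (ι →₀ k)} : MemBool A Ω U → MemBool A Ω V → MemBool A Ω (U ∩ V)
  | sdiff {U V : Set (ι →₀ k)} : MemBool A Ω U → MemBool A Ω V → MemBool A Ω (U \ V)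

/-!
Every `Y ∈ Bool(k^(J))` is a union of sign cells of finitely many functionals `F₀`. On a line
parallel to a coordinate axis, the sign pattern of a point is determined by its position relative
to the roots of the functionals, so Fourier–Motzkin elimination of the finitely many coordinates
`T` outside `I` that occur in `F₀ ∪ D` shows: for every sign cell `C` of `D`, the projection of
`Y ∩ C` along `T` is a union of sign cells of functionals supported in `I`. Hence
`Z = ⋃_C proj_T (Y ∩ C) ∩ C` lies in `Bool(k^(I) ∪ D)`. It contains `Y`, and it lies in every
`W ∈ Bool(k^(I) ∪ D)` containing `Y`, since membership in such a `W` depends only on the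
`I`-coordinates and on the signs of the elements of `D`. Complements give the greatest lower
approximation.
-/

open Set

theorem IsStrictOrderedRing.of_posMulStrictMono (R : Type*) [Ring R] [LinearOrder R]
    [Nontrivial R] [CovariantClass R R (· + ·) (· < ·)] [PosMulStrictMono R] :
    IsStrictOrderedRing R :=
  haveI := covariantClass_le_of_lt R R (· + ·)
  haveI : IsOrderedAddMonoid R :=
    { add_le_add_left := fun a b h c => by simpa only [add_comm _ c] using add_le_add_left h c }
  haveI : ZeroLEOneClass R :=
    ⟨le_of_not_gt fun h => (mul_pos (neg_pos.2 h) (neg_pos.2 h)).not_gt (by simpa using h)⟩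
  .of_mul_pos fun _ _ => mul_pos

instance DivisionRing.denselyOrdered {k : Type*} [DivisionRing k] [LinearOrder k]
    [IsStrictOrderedRing k] : DenselyOrdered k where
  dense a b h := ⟨(a + b) / 2,
    calc a = (a + a) / 2 := (add_self_div_two a).symm
      _ < (a + b) / 2 := by gcongr,
    calc (a + b) / 2 < (b + b) / 2 := by gcongr
      _ = b := add_self_div_two b⟩

theorem exists_sign_sub_eq_sign_sub {α β : Type*} [AddCommGroup β] [LinearOrder β]
    [IsOrderedAddMonoid β] [DenselyOrdered β] [Nontrivial β] {S : Finset α} {r r' : α → β}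
    (h : ∀ f ∈ S, ∀ g ∈ S, SignType.sign (r g - r f) = SignType.sign (r' g - r' f)) (t : β) :
    ∃ t', ∀ f ∈ S, SignType.sign (t - r f) = SignType.sign (t' - r' f) := by
  classical
  by_cases hroot : ∃ f₀ ∈ S, r f₀ = t
  · obtain ⟨f₀, hf₀, rfl⟩ := hroot
    exact ⟨r' f₀, fun f hf => h f hf f₀ hf₀⟩
  push Not at hroot
  obtain ⟨t', below, above⟩ := Finset.exists_between'
    ((S.filter (r · < t)).image r') ((S.filter (t < r ·)).image r') <| by
      simp only [Finset.mem_image, Finset.mem_filter]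
      rintro _ ⟨f, ⟨hf, hft⟩, rfl⟩ _ ⟨g, ⟨hg, htg⟩, rfl⟩
      have hfg := h f hf g hg
      rw [sign_pos (sub_pos.2 (hft.trans htg))] at hfg
      exact sub_pos.1 (sign_eq_one_iff.1 hfg.symm)
  refine ⟨t', fun f hf => ?_⟩
  rcases (hroot f hf).lt_or_gt with hlt | hgt
  · have := below _ (Finset.mem_image_of_mem r' (Finset.mem_filter.2 ⟨hf, hlt⟩))
    rw [sign_pos (sub_pos.2 hlt), sign_pos (sub_pos.2 this)]
  · have := above _ (Finset.mem_image_of_mem r' (Finset.mem_filter.2 ⟨hf, hgt⟩))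
    rw [sign_neg (sub_neg.2 hgt), sign_neg (sub_neg.2 this)]

section Pairing

variable {k ι : Type*} [DivisionRing k]

theorem pairing_add (f g x : ι →₀ k) : pairing (f + g) x = pairing f x + pairing g x :=
  Finsupp.sum_add_index' (fun _ => zero_mul _) (fun _ _ _ => add_mul _ _ _)

theorem pairing_sub (f g x : ι →₀ k) : pairing (f - g) x = pairing f x - pairing g x :=
  Finsupp.sum_sub_index fun _ _ _ => sub_mul _ _ _

theorem pairing_smul (c : k) (f x : ι →₀ k) : pairing (c • f) x = c * pairing f x := by
  rw [pairing, Finsupp.sum_smul_index' fun _ => zero_mul _, pairing, Finsupp.mul_sum]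
  simp only [smul_eq_mul, mul_assoc]

theorem pairing_single (j : ι) (c : k) (x : ι →₀ k) :
    pairing (Finsupp.single j c) x = c * x j :=
  Finsupp.sum_single_index (zero_mul _)

theorem pairing_congr {f x y : ι →₀ k} (h : ∀ i, f i ≠ 0 → x i = y i) :
    pairing f x = pairing f y :=
  Finsupp.sum_congr fun i hi => by rw [h i (Finsupp.mem_support_iff.1 hi)]

theorem pairing_update (f x : ι →₀ k) (j : ι) (t : k) :
    pairing f (x.update j t) = pairing (f.erase j) x + f j * t := by
  classical
  conv_lhs => rw [← Finsupp.erase_add_single j f]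
  rw [pairing_add, pairing_single, Finsupp.coe_update, Function.update_self]
  congr 1
  exact pairing_congr fun i hi => Function.update_of_ne (by rintro rfl; simp at hi) _ _

end Pairing

namespace MemBool

variable {k ι : Type*} [DivisionRing k] [LinearOrder k] {A Ω : Set (ι →₀ k)}

theorem compl {U : Set (ι →₀ k)} (h : MemBool A univ U) : MemBool A univ Uᶜ :=
  compl_eq_univ_sdiff U ▸ .sdiff .full h

theorem biUnion {β : Type*} {s : Set β} (hs : s.Finite) {g : β → Set (ι →₀ k)}
    (h : ∀ b ∈ s, MemBool A Ω (g b)) : MemBool A Ω (⋃ b ∈ s, g b) := by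
  induction s, hs using Set.Finite.induction_on with
  | empty => simpa using .empty
  | insert _ _ ih =>
    rw [biUnion_insert]
    exact .union (h _ (mem_insert _ _)) (ih fun b hb => h b (mem_insert_of_mem _ hb))

theorem iUnion {β : Type*} [Finite β] {g : β → Set (ι →₀ k)} (h : ∀ b, MemBool A Ω (g b)) :
    MemBool A Ω (⋃ b, g b) := by
  simpa using biUnion finite_univ fun b _ => h b

theorem biInter {β : Type*} {s : Set β} (hs : s.Finite) {g : β → Set (ι →₀ k)}
    (h : ∀ b ∈ s, MemBool A univ (g b)) : MemBool A univ (⋂ b ∈ s, g b) := by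
  induction s, hs using Set.Finite.induction_on with
  | empty => simpa using .full
  | insert _ _ ih =>
    rw [biInter_insert]
    exact .inter (h _ (mem_insert _ _)) (ih fun b hb => h b (mem_insert_of_mem _ hb))

theorem sign_eq {a : ι →₀ k} (ha : a ∈ A) (s : SignType) :
    MemBool A univ {x | SignType.sign (pairing a x) = s} := by
  have hpos : MemBool A univ {x | 0 < pairing a x} := by simpa using MemBool.pos (Ω := univ) a ha
  have hneg : MemBool A univ {x | pairing a x < 0} := by simpa using MemBool.neg (Ω := univ) a ha
  cases s with
  | zero =>
    convert (hpos.union hneg).compl using 1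
    ext x
    simp [le_antisymm_iff]
  | neg => simpa only [SignType.neg_eq_neg_one, sign_eq_neg_one_iff] using hneg
  | pos => simpa only [SignType.pos_eq_one, sign_eq_one_iff] using hpos

end MemBool

section SignInvariance

variable {k ι : Type*} [DivisionRing k] [LinearOrder k]

def SignInvariant (F : Finset (ι →₀ k)) (Y : Set (ι →₀ k)) : Prop :=
  ∀ x y, (∀ f ∈ F, SignType.sign (pairing f x) = SignType.sign (pairing f y)) → x ∈ Y → y ∈ Y

theorem SignInvariant.mono {F F' : Finset (ι →₀ k)} {Y : Set (ι →₀ k)} (h : SignInvariant F Y)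
    (hF : F ⊆ F') : SignInvariant F' Y :=
  fun x y hxy => h x y fun f hf => hxy f (hF hf)

theorem SignInvariant.inter {F : Finset (ι →₀ k)} {Y Y' : Set (ι →₀ k)} (h : SignInvariant F Y)
    (h' : SignInvariant F Y') : SignInvariant F (Y ∩ Y') :=
  fun x y hxy hx => ⟨h x y hxy hx.1, h' x y hxy hx.2⟩

def signCell (F : Finset (ι →₀ k)) (σ : F → SignType) : Set (ι →₀ k) :=
  {x | ∀ f : F, SignType.sign (pairing f x) = σ f}

theorem signCell_signInvariant (F : Finset (ι →₀ k)) (σ : F → SignType) :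
    SignInvariant F (signCell F σ) :=
  fun _ _ hxy hx f => (hxy f f.2).symm.trans (hx f)

variable {A Y : Set (ι →₀ k)} {F : Finset (ι →₀ k)}

theorem memBool_signCell (hF : ↑F ⊆ A) (σ : F → SignType) : MemBool A univ (signCell F σ) := by
  have : signCell F σ = ⋂ f ∈ (univ : Set F), {x | SignType.sign (pairing f x) = σ f} := by
    ext; simp [signCell]
  rw [this]
  exact .biInter finite_univ fun f _ => .sign_eq (hF f.2) _

theorem MemBool.of_signInvariant (hF : ↑F ⊆ A) (hY : SignInvariant F Y) : MemBool A univ Y := by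
  let signs : (ι →₀ k) → F → SignType := fun x f => SignType.sign (pairing f x)
  have : Y = ⋃ σ ∈ signs '' Y, signCell F σ := by
    ext x
    simp only [mem_iUnion, mem_image, exists_prop]
    constructor
    · exact fun hx => ⟨signs x, ⟨x, hx, rfl⟩, fun f => rfl⟩
    · rintro ⟨_, ⟨y, hy, rfl⟩, hx⟩
      exact hY y x (fun f hf => (hx ⟨f, hf⟩).symm) hy
  rw [this]
  exact .biUnion (toFinite _) fun σ _ => memBool_signCell hF σ

theorem MemBool.exists_signInvariant (h : MemBool A univ Y) :
    ∃ F : Finset (ι →₀ k), ↑F ⊆ A ∧ SignInvariant F Y := by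
  classical
  induction h with
  | pos a ha =>
    exact ⟨{a}, by simpa using ha, fun x y hxy hx =>
      ⟨trivial, sign_eq_one_iff.1 ((hxy a (Finset.mem_singleton_self a)).symm.trans
        (sign_pos hx.2))⟩⟩
  | neg a ha =>
    exact ⟨{a}, by simpa using ha, fun x y hxy hx =>
      ⟨trivial, sign_eq_neg_one_iff.1 ((hxy a (Finset.mem_singleton_self a)).symm.trans
        (sign_neg hx.2))⟩⟩
  | empty => exact ⟨∅, by simp, fun _ _ _ => id⟩
  | full => exact ⟨∅, by simp, fun _ _ _ _ => trivial⟩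
  | union _ _ ih₁ ih₂ =>
    obtain ⟨F₁, hF₁, h₁⟩ := ih₁
    obtain ⟨F₂, hF₂, h₂⟩ := ih₂
    refine ⟨F₁ ∪ F₂, by simpa using union_subset hF₁ hF₂, fun x y hxy hx => ?_⟩
    exact hx.imp (h₁.mono Finset.subset_union_left x y hxy)
      (h₂.mono Finset.subset_union_right x y hxy)
  | inter _ _ ih₁ ih₂ =>
    obtain ⟨F₁, hF₁, h₁⟩ := ih₁
    obtain ⟨F₂, hF₂, h₂⟩ := ih₂
    exact ⟨F₁ ∪ F₂, by simpa using union_subset hF₁ hF₂,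
      (h₁.mono Finset.subset_union_left).inter (h₂.mono Finset.subset_union_right)⟩
  | sdiff _ _ ih₁ ih₂ =>
    obtain ⟨F₁, hF₁, h₁⟩ := ih₁
    obtain ⟨F₂, hF₂, h₂⟩ := ih₂
    refine ⟨F₁ ∪ F₂, by simpa using union_subset hF₁ hF₂, fun x y hxy hx => ?_⟩
    refine ⟨h₁.mono Finset.subset_union_left x y hxy hx.1, fun hy => hx.2 ?_⟩
    exact h₂.mono Finset.subset_union_right y x (fun f hf => (hxy f hf).symm) hy

end SignInvariance

section Elimination

variable {k ι : Type*} [DivisionRing k]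

def projAlong (T : Finset ι) (Y : Set (ι →₀ k)) : Set (ι →₀ k) :=
  {x | ∃ y ∈ Y, ∀ i ∉ T, y i = x i}

theorem projAlong_empty (Y : Set (ι →₀ k)) : projAlong ∅ Y = Y := by
  ext x
  constructor
  · rintro ⟨y, hy, hyx⟩
    rwa [← Finsupp.ext fun i => hyx i (Finset.notMem_empty i)]
  · exact fun hx => ⟨x, hx, fun _ _ => rfl⟩

theorem projAlong_insert [DecidableEq ι] (j : ι) (T : Finset ι) (Y : Set (ι →₀ k)) :
    projAlong (insert j T) Y = projAlong {j} (projAlong T Y) := by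
  ext x
  constructor
  · rintro ⟨y, hy, hyx⟩
    refine ⟨x.update j (y j), ⟨y, hy, fun i hi => ?_⟩, fun i hi => ?_⟩
    · by_cases hij : i = j
      · simp [hij]
      · simp [Finsupp.update_apply, hij, hyx i (by simp [hi, hij])]
    · simp [Finsupp.update_apply, Finset.mem_singleton.not.1 hi]
  · rintro ⟨z, ⟨y, hy, hyz⟩, hzx⟩
    refine ⟨y, hy, fun i hi => ?_⟩
    rw [Finset.mem_insert, not_or] at hi
    rw [hyz i hi.2, hzx i (Finset.mem_singleton.not.2 hi.1)]

/-- When `f j ≠ 0`, the line through `x` parallel to the `j`-th axis meets the hyperplane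
`f = 0` at `j`-th coordinate `-pairing (rootAt j f) x`. -/
noncomputable def rootAt (j : ι) (f : ι →₀ k) : ι →₀ k := (f j)⁻¹ • f.erase j

theorem pairing_update_of_ne_zero {f : ι →₀ k} {j : ι} (hf : f j ≠ 0) (x : ι →₀ k) (t : k) :
    pairing f (x.update j t) = f j * (t + pairing (rootAt j f) x) := by
  rw [pairing_update, rootAt, pairing_smul, mul_add, ← mul_assoc, mul_inv_cancel₀ hf, one_mul,
    add_comm]

theorem erase_mem_suppIn {S : Set ι} {f : ι →₀ k} (hf : f ∈ suppIn S) (j : ι) :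
    f.erase j ∈ suppIn (S \ {j}) := fun i hi => by
  classical
  by_cases hij : i = j
  · simp [hij]
  · simp [Finsupp.erase_ne hij, hf i fun hiS => hi ⟨hiS, hij⟩]

theorem rootAt_sub_rootAt_mem_suppIn {S : Set ι} {f g : ι →₀ k} (hf : f ∈ suppIn S)
    (hg : g ∈ suppIn S) (j : ι) : rootAt j f - rootAt j g ∈ suppIn (S \ {j}) := fun i hi => by
  simp [rootAt, erase_mem_suppIn hf j i hi, erase_mem_suppIn hg j i hi]

variable [LinearOrder k] [IsStrictOrderedRing k]

theorem exists_signInvariant_projAlong_singleton {S : Set ι} {F : Finset (ι →₀ k)}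
    (hF : (F : Set (ι →₀ k)) ⊆ suppIn S) (j : ι) :
    ∃ F' : Finset (ι →₀ k), (F' : Set (ι →₀ k)) ⊆ suppIn (S \ {j}) ∧
      ∀ Y, SignInvariant F Y → SignInvariant F' (projAlong {j} Y) := by
  classical
  -- `f.erase j` controls the `f` with `f j = 0`; the differences of roots fix the order in which
  -- a line parallel to the `j`-th axis crosses the other hyperplanes `f = 0`.
  refine ⟨F.image (Finsupp.erase j) ∪ (F ×ˢ F).image fun p => rootAt j p.1 - rootAt j p.2,
    ?_, ?_⟩
  · intro f hf
    rcases Finset.mem_union.1 hf with hf | hf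
    · obtain ⟨g, hg, rfl⟩ := Finset.mem_image.1 hf
      exact erase_mem_suppIn (hF hg) j
    · obtain ⟨⟨g, h⟩, hgh, rfl⟩ := Finset.mem_image.1 hf
      exact rootAt_sub_rootAt_mem_suppIn (hF (Finset.mem_product.1 hgh).1)
        (hF (Finset.mem_product.1 hgh).2) j
  rintro Y hY x x' hxx' ⟨y, hy, hyx⟩
  have hroots : ∀ f ∈ F, ∀ g ∈ F,
      SignType.sign (-pairing (rootAt j g) x - -pairing (rootAt j f) x) =
        SignType.sign (-pairing (rootAt j g) x' - -pairing (rootAt j f) x') := by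
    intro f hf g hg
    simpa [pairing_sub, neg_add_eq_sub] using hxx' _ <| Finset.mem_union_right _ <|
      Finset.mem_image.2 ⟨(f, g), Finset.mem_product.2 ⟨hf, hg⟩, rfl⟩
  obtain ⟨t', ht'⟩ := exists_sign_sub_eq_sign_sub hroots (y j)
  have hy' : x.update j (y j) = y := Finsupp.ext fun i => by
    by_cases hij : i = j
    · simp [hij]
    · simp [Finsupp.update_apply, hij, hyx i (Finset.mem_singleton.not.2 hij)]
  refine ⟨x'.update j t', hY _ _ (fun f hf => ?_) (hy' ▸ hy), fun i hi => ?_⟩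
  · by_cases hfj : f j = 0
    · simp only [pairing_update, hfj, zero_mul, add_zero]
      exact hxx' _ (Finset.mem_union_left _ (Finset.mem_image_of_mem _ hf))
    · rw [pairing_update_of_ne_zero hfj, pairing_update_of_ne_zero hfj, sign_mul, sign_mul,
        ← sub_neg_eq_add, ← sub_neg_eq_add, ht' f hf]
  · simp [Finsupp.update_apply, Finset.mem_singleton.not.1 hi]

theorem exists_signInvariant_projAlong {S : Set ι} {F : Finset (ι →₀ k)}
    (hF : (F : Set (ι →₀ k)) ⊆ suppIn S) (T : Finset ι) :
    ∃ F' : Finset (ι →₀ k), (F' : Set (ι →₀ k)) ⊆ suppIn (S \ T) ∧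
      ∀ Y, SignInvariant F Y → SignInvariant F' (projAlong T Y) := by
  classical
  induction T using Finset.induction_on with
  | empty => exact ⟨F, by simpa using hF, fun Y hY => (projAlong_empty Y).symm ▸ hY⟩
  | insert j T _ ih =>
    obtain ⟨F₁, hF₁, hinv₁⟩ := ih
    obtain ⟨F', hF', hinv'⟩ := exists_signInvariant_projAlong_singleton hF₁ j
    refine ⟨F', ?_, fun Y hY => projAlong_insert j T Y ▸ hinv' _ (hinv₁ Y hY)⟩
    rwa [Finset.coe_insert, insert_eq, union_comm, ← sdiff_sdiff]

end Elimination

section RelativeCompleteness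

variable {k ι : Type*} [DivisionRing k] [LinearOrder k]

theorem MemBool.mem_of_eqOn_of_sign_eq {I : Set ι} {D W : Set (ι →₀ k)}
    (hW : MemBool (suppIn I ∪ D) univ W) {x y : ι →₀ k} (hI : ∀ i ∈ I, x i = y i)
    (hD : ∀ d ∈ D, SignType.sign (pairing d x) = SignType.sign (pairing d y)) (hx : x ∈ W) :
    y ∈ W := by
  obtain ⟨F, hFA, hF⟩ := hW.exists_signInvariant
  refine hF x y (fun f hf => ?_) hx
  rcases hFA hf with hfI | hfD
  · rw [pairing_congr fun i hi => hI i (not_not.1 (mt (hfI i) hi))]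
  · exact hD f hfD

variable [IsStrictOrderedRing k]

theorem exists_isLeast_memBool_superset (I : Set ι) {D : Set (ι →₀ k)} (hD : D.Finite)
    {Y : Set (ι →₀ k)} (hY : MemBool univ univ Y) :
    ∃ Z, IsLeast {W | MemBool (suppIn I ∪ D) univ W ∧ Y ⊆ W} Z := by
  classical
  obtain ⟨F₀, -, hF₀⟩ := hY.exists_signInvariant
  set E := hD.toFinset
  set G := F₀ ∪ E
  set T := (G.sup Finsupp.support).filter (· ∉ I)
  have hG : (G : Set (ι →₀ k)) ⊆ suppIn ↑(G.sup Finsupp.support) := fun g hg i hi =>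
    Finsupp.notMem_support_iff.1 fun hgi => hi (Finset.mem_sup.2 ⟨g, hg, hgi⟩)
  obtain ⟨G', hG'I, hG'⟩ := exists_signInvariant_projAlong hG T
  have hG'A : (G' : Set (ι →₀ k)) ⊆ suppIn I ∪ D := fun f hf =>
    Or.inl fun i hiI => hG'I hf i fun hiT => hiT.2 (Finset.mem_filter.2 ⟨hiT.1, hiI⟩)
  have hEA : (E : Set (ι →₀ k)) ⊆ suppIn I ∪ D := hD.coe_toFinset ▸ subset_union_right
  refine ⟨⋃ σ : E → SignType, projAlong T (Y ∩ signCell E σ) ∩ signCell E σ, ⟨?_, ?_⟩, ?_⟩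
  · refine .iUnion fun σ => .inter (.of_signInvariant hG'A (hG' _ ?_)) (memBool_signCell hEA σ)
    exact (hF₀.mono Finset.subset_union_left).inter
      ((signCell_signInvariant E σ).mono Finset.subset_union_right)
  · intro x hx
    exact mem_iUnion.2 ⟨fun d => SignType.sign (pairing d x),
      ⟨x, ⟨hx, fun _ => rfl⟩, fun _ _ => rfl⟩, fun _ => rfl⟩
  · rintro W ⟨hW, hYW⟩ x hx
    obtain ⟨σ, ⟨y, ⟨hy, hyσ⟩, hyx⟩, hxσ⟩ := mem_iUnion.1 hx
    refine hW.mem_of_eqOn_of_sign_eq (fun i hi => hyx i fun hiT => (Finset.mem_filter.1 hiT).2 hi)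
      (fun d hd => ?_) (hYW hy)
    have hdE : d ∈ E := hD.mem_toFinset.2 hd
    exact (hyσ ⟨d, hdE⟩).trans (hxσ ⟨d, hdE⟩).symm

theorem exists_isGreatest_memBool_subset (I : Set ι) {D : Set (ι →₀ k)} (hD : D.Finite)
    {Y : Set (ι →₀ k)} (hY : MemBool univ univ Y) :
    ∃ Z, IsGreatest {W | MemBool (suppIn I ∪ D) univ W ∧ W ⊆ Y} Z := by
  obtain ⟨Z, ⟨hZ, hYZ⟩, hleast⟩ := exists_isLeast_memBool_superset I hD hY.compl
  exact ⟨Zᶜ, ⟨hZ.compl, compl_subset_comm.1 hYZ⟩, fun W ⟨hW, hWY⟩ =>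
    subset_compl_comm.1 (hleast ⟨hW.compl, compl_subset_compl.2 hWY⟩)⟩

end RelativeCompleteness

theorem stmt14_general (k ι : Type*) [DivisionRing k] [LinearOrder k]
    [CovariantClass k k (· + ·) (· < ·)] [PosMulStrictMono k]
    (I : Set ι) (D : Set (ι →₀ k)) (hD : D.Finite) :
    ∀ Y : Set (ι →₀ k), MemBool (Set.univ : Set (ι →₀ k)) Set.univ Y →
      (∃ Z : Set (ι →₀ k),
        IsLeast {W : Set (ι →₀ k) | MemBool (suppIn I ∪ D) Set.univ W ∧ Y ⊆ W} Z) ∧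
      (∃ Z : Set (ι →₀ k),
        IsGreatest {W : Set (ι →₀ k) | MemBool (suppIn I ∪ D) Set.univ W ∧ W ⊆ Y} Z) := by
  have := IsStrictOrderedRing.of_posMulStrictMono k
  exact fun Y hY =>
    ⟨exists_isLeast_memBool_superset I hD hY, exists_isGreatest_memBool_subset I hD hY⟩

/-- with `J = ι`, `I ⊆ J` and `D ⊆ k^(J)` finite, the Boolean algebra
`Bool(k^(I) ∪ D, k^(J))` is relatively complete in `Bool(k^(J), k^(J))`: every
`Y ∈ Bool(k^(J), k^(J))` has both a least upper approximation and a greatest lower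
approximation in `Bool(k^(I) ∪ D, k^(J))` (with respect to `⊆`). -/
theorem stmt14 (k ι : Type*) [DivisionRing k] [LinearOrder k]
    [CovariantClass k k (· + ·) (· < ·)] [PosMulStrictMono k] [MulPosStrictMono k]
    (I : Set ι) (D : Set (ι →₀ k)) (hD : D.Finite) :
    ∀ Y : Set (ι →₀ k), MemBool (Set.univ : Set (ι →₀ k)) Set.univ Y →
      (∃ Z : Set (ι →₀ k),
        IsLeast {W : Set (ι →₀ k) | MemBool (suppIn I ∪ D) Set.univ W ∧ Y ⊆ W} Z) ∧
      (∃ Z : Set (ι →₀ k),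
        IsGreatest {W : Set (ι →₀ k) | MemBool (suppIn I ∪ D) Set.univ W ∧ W ⊆ Y} Z) :=
  stmt14_general k ι I D hD
end

section
/- Let D and L be distributive 0-lattices with D finite, let φ : D → L be a 0-lattice homomorphism, let a, b ∈ D, and let c ∈ L. Then φ(a) ≤ φ(b) ∨ c if and only if φ(p) ≤ φ(p_*) ∨ c for every join-irreducible p ∈ Ji(D) with p ≤ a and p ≰ b. -/
/-!
Forward: `p ⊓ b ≤ p_*`, so distributivity in `L` gives
`φ p = (φ p ⊓ φ b) ⊔ (φ p ⊓ c) ≤ φ p_* ⊔ c`.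
Backward: well-founded induction on `a`. The bottom is trivial, a join `x ⊔ y` follows from
its two strictly smaller parts, and a join-irreducible `p ≰ b` satisfies
`φ p ≤ φ p_* ⊔ c ≤ φ b ⊔ c` by the hypothesis and the induction hypothesis for `p_* < p`.
-/

theorem WellFoundedLT.induction_supIrred {α : Type*} [SemilatticeSup α] [OrderBot α]
    [WellFoundedLT α] {P : α → Prop} (bot : P ⊥) (sup : ∀ x y, P x → P y → P (x ⊔ y))
    (supIrred : ∀ p, SupIrred p → (∀ q < p, P q) → P p) (a : α) : P a := by
  induction a using WellFoundedLT.induction with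
  | _ a ih =>
    by_cases ha : SupIrred a
    · exact supIrred a ha ih
    obtain ha | ⟨x, y, rfl, hx, hy⟩ := not_supIrred.1 ha
    · exact ha.eq_bot ▸ bot
    · exact sup x y (ih x hx) (ih y hy)

section
variable {F α β : Type*}

theorem map_le_map_sup_of_le_of_inf_le [Lattice α] [DistribLattice β] [FunLike F α β]
    [LatticeHomClass F α β] (f : F) {a b p q : α} {c : β} (hpa : p ≤ a) (hq : p ⊓ b ≤ q)
    (h : f a ≤ f b ⊔ c) : f p ≤ f q ⊔ c :=
  have hp : f p ≤ f b ⊔ c := (OrderHomClass.mono f hpa).trans h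
  calc f p = f (p ⊓ b) ⊔ f p ⊓ c := by rw [map_inf, ← inf_sup_left, inf_eq_left.2 hp]
    _ ≤ f q ⊔ c := sup_le_sup (OrderHomClass.mono f hq) inf_le_right

theorem map_le_map_sup_of_forall_supIrred [SemilatticeSup α] [OrderBot α] [WellFoundedLT α]
    [SemilatticeSup β] [FunLike F α β] [SupHomClass F α β] (f : F) {g : α → α}
    (hg : ∀ p, SupIrred p → g p < p) {a b : α} {c : β}
    (h : ∀ p, SupIrred p → p ≤ a → ¬p ≤ b → f p ≤ f (g p) ⊔ c) : f a ≤ f b ⊔ c := by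
  revert h
  induction a using WellFoundedLT.induction_supIrred with
  | bot => exact fun _ => le_sup_of_le_left (OrderHomClass.mono f bot_le)
  | sup x y hx hy =>
    intro h
    rw [map_sup]
    exact sup_le (hx fun p hp hpx => h p hp (le_sup_of_le_left hpx))
      (hy fun p hp hpy => h p hp (le_sup_of_le_right hpy))
  | supIrred p hp ih =>
    intro h
    by_cases hpb : p ≤ b
    · exact le_sup_of_le_left (OrderHomClass.mono f hpb)
    have hgp : f (g p) ≤ f b ⊔ c :=
      ih (g p) (hg p hp) fun q hq hqg => h q hq (hqg.trans (hg p hp).le)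
    calc f p ≤ f (g p) ⊔ c := h p hp le_rfl hpb
      _ ≤ f b ⊔ c := sup_le hgp le_sup_right

end

theorem stmt18_general {D L : Type*} [DistribLattice D] [OrderBot D] [Finite D]
    [DistribLattice L]
    (φ : D → L)
    (hφ : ∀ x y : D, φ (x ⊔ y) = φ x ⊔ φ y ∧ φ (x ⊓ y) = φ x ⊓ φ y)
    (pstar : D → D) (hpstar : ∀ p : D, SupIrred p → IsGreatest {x : D | x < p} (pstar p))
    (a b : D) (c : L) :
    φ a ≤ φ b ⊔ c ↔ ∀ p : D, SupIrred p → p ≤ a → ¬ p ≤ b → φ p ≤ φ (pstar p) ⊔ c := by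
  have : WellFoundedLT D := Finite.to_wellFoundedLT
  let f : LatticeHom D L := ⟨⟨φ, fun x y => (hφ x y).1⟩, fun x y => (hφ x y).2⟩
  refine ⟨fun h p hp hpa hpb => ?_, map_le_map_sup_of_forall_supIrred f fun p hp => ?_⟩
  · exact map_le_map_sup_of_le_of_inf_le f hpa ((hpstar p hp).2 (inf_lt_left.2 hpb)) h
  · exact (hpstar p hp).1

/-- for a `0`-lattice homomorphism `φ : D → L` from a finite distributive
lattice `D` to a distributive `0`-lattice `L`, and `a b : D`, `c : L`, one has
`φ a ≤ φ b ⊔ c` iff `φ p ≤ φ p_* ⊔ c` for every join-irreducible `p ≤ a` with `p ≰ b`.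
Here `pstar p` denotes the unique lower cover `p_*` of a join-irreducible `p`,
characterized as the greatest element strictly below `p`. -/
theorem stmt18 {D L : Type*} [DistribLattice D] [OrderBot D] [Finite D]
    [DistribLattice L] [OrderBot L]
    (φ : D → L)
    (hφ : ∀ x y : D, φ (x ⊔ y) = φ x ⊔ φ y ∧ φ (x ⊓ y) = φ x ⊓ φ y)
    (hφ0 : φ ⊥ = ⊥)
    (pstar : D → D) (hpstar : ∀ p : D, SupIrred p → IsGreatest {x : D | x < p} (pstar p))
    (a b : D) (c : L) :
    φ a ≤ φ b ⊔ c ↔ ∀ p : D, SupIrred p → p ≤ a → ¬ p ≤ b → φ p ≤ φ (pstar p) ⊔ c :=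
  stmt18_general φ hφ pstar hpstar a b c
end
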